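/- arXiv:2508.17112 — 3 statements merged into one kernel-verified Lean document; each statement's English description precedes it below -/
import Mathlib

section
/- Let p ∈ [0,1] with p ≠ 1/2 and q = 1 − p. Let X and Y be real random variables on a probability space such that X ~ Bernoulli(p), Y is independent of X, Y is square-integrable, and X + Y is symmetric about 0. Then Var(Y) ≥ p·q. -/
/-!
Symmetry of `X + Y` gives `E[X + Y] = 0`, hence `E[Y] = -p`, so it suffices to show `E[Y²] ≥ p`.
For every odd test function `h`, symmetry gives `E[h(X + Y)] = 0`, and conditioning on the
independent Bernoulli variable `X` turns this into `(1 - p) E[h(Y)] + p E[h(Y + 1)] = 0`.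
Take `h y = -y + g y / (1 - 2p)`, where `g y = (-1)^⌊y⌋ {y} (1 - {y})` is odd, satisfies
`g (y + 1) = -g y` and `g y ≤ y (y + 1)`. Then `(1 - p) h y + p h (y + 1) + p = -y + g y ≤ y²`
pointwise, and integrating against the law of `Y` yields `p ≤ E[Y²]`.
-/

open MeasureTheory ProbabilityTheory

noncomputable def alternatingArc (y : ℝ) : ℝ :=
  (-1 : ℝ) ^ ⌊y⌋ * (Int.fract y * (1 - Int.fract y))

theorem measurable_alternatingArc : Measurable alternatingArc :=
  (measurable_from_top.comp Int.measurable_floor).mul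
    (measurable_fract.mul (measurable_const.sub measurable_fract))

theorem alternatingArc_antiperiodic : Function.Antiperiodic alternatingArc 1 := by
  intro y
  rw [alternatingArc, alternatingArc, Int.fract_add_one, Int.floor_add_one,
    zpow_add_one₀ (by norm_num)]
  ring

theorem neg_one_zpow_neg_add_one (k : ℤ) : (-1 : ℝ) ^ (-(k + 1)) = -(-1) ^ k := by
  rw [zpow_neg, zpow_add_one₀ (by norm_num), mul_inv, ← inv_zpow, inv_neg_one]
  norm_num

theorem alternatingArc_odd : Function.Odd alternatingArc := by
  intro y
  rcases eq_or_ne (Int.fract y) 0 with h | h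
  · simp [alternatingArc, h, Int.fract_neg_eq_zero.2 h]
  · have hfloor : ⌊-y⌋ = -(⌊y⌋ + 1) := by
      rw [Int.floor_neg, (Int.ceil_eq_floor_add_one_iff_notMem y).2 (Int.fract_ne_zero_iff.1 h)]
    rw [alternatingArc, alternatingArc, hfloor, neg_one_zpow_neg_add_one, Int.fract_neg h]
    ring

theorem abs_alternatingArc_le (y : ℝ) : |alternatingArc y| ≤ 1 / 4 := by
  have h0 := Int.fract_nonneg y
  have h1 := Int.fract_lt_one y
  rw [alternatingArc, abs_mul, abs_neg_one_zpow, one_mul, abs_of_nonneg (by nlinarith)]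
  nlinarith [sq_nonneg (Int.fract y - 1 / 2)]

theorem alternatingArc_le_mul_add_one (y : ℝ) : alternatingArc y ≤ y * (y + 1) := by
  have hy : y = ⌊y⌋ + Int.fract y := (Int.floor_add_fract y).symm
  have ht0 : 0 ≤ Int.fract y := Int.fract_nonneg y
  have ht1 : Int.fract y < 1 := Int.fract_lt_one y
  have harc : alternatingArc y = (-1 : ℝ) ^ ⌊y⌋ * (Int.fract y * (1 - Int.fract y)) := rfl
  generalize ⌊y⌋ = k at *
  generalize Int.fract y = t at *
  subst hy
  rw [harc]
  rcases eq_or_ne k (-1) with rfl | hk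
  · norm_num
    linarith
  have hsign : (-1 : ℝ) ^ k * (t * (1 - t)) ≤ t * (1 - t) :=
    mul_le_of_le_one_left (by nlinarith) ((le_abs_self _).trans (abs_neg_one_zpow k).le)
  refine hsign.trans ?_
  obtain hk' | hk' : k ≤ -2 ∨ 0 ≤ k := by omega
  · have : (k : ℝ) ≤ -2 := by exact_mod_cast hk'
    nlinarith
  · have : (0 : ℝ) ≤ k := by exact_mod_cast hk'
    nlinarith

noncomputable def symmetrizerTest (p y : ℝ) : ℝ := -y + (1 - 2 * p)⁻¹ * alternatingArc y

theorem measurable_symmetrizerTest (p : ℝ) : Measurable (symmetrizerTest p) :=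
  measurable_neg.add (measurable_alternatingArc.const_mul _)

theorem symmetrizerTest_odd (p : ℝ) : Function.Odd (symmetrizerTest p) := by
  intro y
  rw [symmetrizerTest, symmetrizerTest, alternatingArc_odd]
  ring

theorem symmetrizerTest_mix_add_le {p : ℝ} (hp : p ≠ 1 / 2) (y : ℝ) :
    (1 - p) * symmetrizerTest p y + p * symmetrizerTest p (y + 1) + p ≤ y ^ 2 := by
  have hc : (1 - 2 * p) * (1 - 2 * p)⁻¹ = 1 := mul_inv_cancel₀ (by contrapose! hp; linarith)
  have hmix : (1 - p) * symmetrizerTest p y + p * symmetrizerTest p (y + 1) + p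
      = -y + alternatingArc y := by
    rw [symmetrizerTest, symmetrizerTest, alternatingArc_antiperiodic]
    linear_combination alternatingArc y * hc
  rw [hmix]
  nlinarith [alternatingArc_le_mul_add_one y]

section

variable {Ω : Type*} [MeasurableSpace Ω] {μ : Measure Ω}

theorem integral_comp_eq_zero_of_map_eq_map_neg {Z : Ω → ℝ} (hZ : AEMeasurable Z μ)
    (hsymm : μ.map Z = μ.map (fun ω => -Z ω)) {h : ℝ → ℝ} (hh : Measurable h)
    (hodd : Function.Odd h) : ∫ ω, h (Z ω) ∂μ = 0 := by
  have : ∫ ω, h (Z ω) ∂μ = -∫ ω, h (Z ω) ∂μ :=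
    calc ∫ ω, h (Z ω) ∂μ = ∫ z, h z ∂(μ.map Z) :=
          (integral_map hZ hh.aestronglyMeasurable).symm
      _ = ∫ ω, h (-Z ω) ∂μ := by
          rw [hsymm]
          exact integral_map hZ.neg hh.aestronglyMeasurable
      _ = -∫ ω, h (Z ω) ∂μ := by simp only [hodd _, integral_neg]
  linarith

theorem ProbabilityTheory.IndepFun.integral_indicator_preimage_comp {α β : Type*}
    [MeasurableSpace α] [MeasurableSpace β] {X : Ω → α} {Y : Ω → β} (hXY : IndepFun X Y μ)
    (hX : Measurable X) (hY : Measurable Y) {s : Set α} (hs : MeasurableSet s) {g : β → ℝ}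
    (hg : Measurable g) :
    ∫ ω, (X ⁻¹' s).indicator (fun ω => g (Y ω)) ω ∂μ = μ.real (X ⁻¹' s) * ∫ ω, g (Y ω) ∂μ := by
  have hmul : (X ⁻¹' s).indicator (fun ω => g (Y ω))
      = fun ω => s.indicator 1 (X ω) * g (Y ω) := by
    ext ω
    by_cases hω : X ω ∈ s <;> simp [hω]
  rw [hmul, hXY.integral_fun_comp_mul_comp hX.aemeasurable hY.aemeasurable
    (measurable_one.indicator hs).aestronglyMeasurable hg.aestronglyMeasurable,
    ← integral_indicator_one (hX hs)]
  rfl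

theorem integral_comp_add_of_indepFun_of_ae_eq_zero_or_one {X Y : Ω → ℝ}
    (hXY : IndepFun X Y μ) (hX : Measurable X) (hY : Measurable Y)
    (hX01 : ∀ᵐ ω ∂μ, X ω = 0 ∨ X ω = 1) {f : ℝ → ℝ} (hf : Measurable f)
    (hfY : Integrable (fun ω => f (Y ω)) μ) (hfY1 : Integrable (fun ω => f (Y ω + 1)) μ) :
    ∫ ω, f (X ω + Y ω) ∂μ =
      μ.real {ω | X ω = 0} * ∫ ω, f (Y ω) ∂μ + μ.real {ω | X ω = 1} * ∫ ω, f (Y ω + 1) ∂μ := by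
  have hsplit : (fun ω => f (X ω + Y ω)) =ᵐ[μ] fun ω =>
      (X ⁻¹' {0}).indicator (fun ω => f (Y ω)) ω
        + (X ⁻¹' {1}).indicator (fun ω => f (Y ω + 1)) ω := by
    filter_upwards [hX01] with ω hω
    rcases hω with h | h <;> simp [h, add_comm]
  rw [integral_congr_ae hsplit,
    integral_add (hfY.indicator (hX (measurableSet_singleton 0)))
      (hfY1.indicator (hX (measurableSet_singleton 1))),
    hXY.integral_indicator_preimage_comp hX hY (measurableSet_singleton 0) hf,
    hXY.integral_indicator_preimage_comp hX hY (measurableSet_singleton 1)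
      (g := fun y => f (y + 1)) (hf.comp (measurable_add_const 1))]
  rfl

theorem ae_eq_zero_or_eq_one_of_measure_add_eq_one [IsProbabilityMeasure μ] {X : Ω → ℝ}
    (hX : Measurable X) (h : μ {ω | X ω = 0} + μ {ω | X ω = 1} = 1) :
    ∀ᵐ ω ∂μ, X ω = 0 ∨ X ω = 1 := by
  have hmeas : ∀ a : ℝ, MeasurableSet {ω | X ω = a} := fun a => hX (measurableSet_singleton a)
  refine (ae_iff_measure_eq ((hmeas 0).union (hmeas 1)).nullMeasurableSet).2 ?_
  rw [measure_univ, ← h, ← measure_union _ (hmeas 1)]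
  · rfl
  · exact Set.disjoint_left.2 fun ω h0 h1 => zero_ne_one (h0.symm.trans h1)

theorem integrable_symmetrizerTest_comp [IsFiniteMeasure μ] (p : ℝ) {Y : Ω → ℝ}
    (hY : Integrable Y μ) :
    Integrable (fun ω => symmetrizerTest p (Y ω)) μ := by
  refine hY.neg.add (Integrable.const_mul ?_ _)
  refine .of_bound ?_ (1 / 4) (.of_forall fun ω => abs_alternatingArc_le (Y ω))
  exact measurable_alternatingArc.comp_aemeasurable hY.aemeasurable |>.aestronglyMeasurable

theorem le_integral_sq_of_integral_symmetrizerTest_mix_eq_zero [IsProbabilityMeasure μ]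
    {Y : Ω → ℝ} (hY : MemLp Y 2 μ) {p : ℝ} (hp : p ≠ 1 / 2)
    (hmix : (1 - p) * ∫ ω, symmetrizerTest p (Y ω) ∂μ
      + p * ∫ ω, symmetrizerTest p (Y ω + 1) ∂μ = 0) :
    p ≤ ∫ ω, Y ω ^ 2 ∂μ := by
  have hHY := integrable_symmetrizerTest_comp p (hY.integrable one_le_two)
  have hHY1 : Integrable (fun ω => symmetrizerTest p (Y ω + 1)) μ :=
    integrable_symmetrizerTest_comp p ((hY.integrable one_le_two).add (integrable_const 1))
  have hint : Integrable (fun ω => (1 - p) * symmetrizerTest p (Y ω)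
      + p * symmetrizerTest p (Y ω + 1)) μ := (hHY.const_mul _).add (hHY1.const_mul _)
  calc p = ∫ ω, ((1 - p) * symmetrizerTest p (Y ω) + p * symmetrizerTest p (Y ω + 1) + p) ∂μ := by
        rw [integral_add hint (integrable_const p), integral_add (hHY.const_mul _)
          (hHY1.const_mul _), integral_const_mul, integral_const_mul, hmix]
        simp
    _ ≤ ∫ ω, Y ω ^ 2 ∂μ := integral_mono (hint.add (integrable_const p))
          hY.integrable_sq fun ω => symmetrizerTest_mix_add_le hp (Y ω)

end

theorem bernoulli_symmetrizer_variance_bound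
    {Ω : Type*} [MeasurableSpace Ω] (μ : Measure Ω) [IsProbabilityMeasure μ]
    (X Y : Ω → ℝ) (hXm : Measurable X) (hYm : Measurable Y)
    (p : ℝ) (hp : p ∈ Set.Icc (0 : ℝ) 1) (hp' : p ≠ 1 / 2)
    (hX1 : μ {ω | X ω = 1} = ENNReal.ofReal p)
    (hX0 : μ {ω | X ω = 0} = ENNReal.ofReal (1 - p))
    (hindep : IndepFun X Y μ)
    (hY2 : MemLp Y 2 μ)
    (hsymm : Measure.map (fun ω => X ω + Y ω) μ
      = Measure.map (fun ω => -(X ω + Y ω)) μ) :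
    variance Y μ ≥ p * (1 - p) := by
  obtain ⟨hp0, hp1⟩ := hp
  have hX01 : ∀ᵐ ω ∂μ, X ω = 0 ∨ X ω = 1 := by
    refine ae_eq_zero_or_eq_one_of_measure_add_eq_one hXm ?_
    rw [hX0, hX1, ← ENNReal.ofReal_add (by linarith) hp0, sub_add_cancel, ENNReal.ofReal_one]
  have hP0 : μ.real {ω | X ω = 0} = 1 - p := by
    rw [measureReal_def, hX0, ENNReal.toReal_ofReal (by linarith)]
  have hP1 : μ.real {ω | X ω = 1} = p := by rw [measureReal_def, hX1, ENNReal.toReal_ofReal hp0]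
  have hmix {f : ℝ → ℝ} (hf : Measurable f) (hodd : Function.Odd f)
      (hfY : Integrable (fun ω => f (Y ω)) μ) (hfY1 : Integrable (fun ω => f (Y ω + 1)) μ) :
      (1 - p) * ∫ ω, f (Y ω) ∂μ + p * ∫ ω, f (Y ω + 1) ∂μ = 0 := by
    rw [← hP0, ← hP1, ← integral_comp_add_of_indepFun_of_ae_eq_zero_or_one hindep hXm hYm hX01
      hf hfY hfY1]
    exact integral_comp_eq_zero_of_map_eq_map_neg (hXm.add hYm).aemeasurable hsymm hf hodd
  have hY : Integrable Y μ := hY2.integrable one_le_two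
  have hY1 : Integrable (fun ω => Y ω + 1) μ := hY.add (integrable_const 1)
  have hEY : ∫ ω, Y ω ∂μ = -p := by
    have h := hmix (f := fun y => y) measurable_id (fun _ => rfl) hY hY1
    rw [integral_add hY (integrable_const 1), integral_const, probReal_univ, one_smul] at h
    linarith
  have hEY2 : p ≤ ∫ ω, Y ω ^ 2 ∂μ :=
    le_integral_sq_of_integral_symmetrizerTest_mix_eq_zero hY2 hp' <|
      hmix (measurable_symmetrizerTest p) (symmetrizerTest_odd p)
        (integrable_symmetrizerTest_comp p hY) (integrable_symmetrizerTest_comp p hY1)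
  rw [ge_iff_le, variance_eq_sub hY2]
  change p * (1 - p) ≤ ∫ ω, Y ω ^ 2 ∂μ - (∫ ω, Y ω ∂μ) ^ 2
  rw [hEY]
  linarith
end

section
/- Let p ∈ ℝ with p ≠ 1/2 and set q = 1 − p. Define ψ : ℝ → ℝ by ψ(t) = h(t)/(q − p) − t, where h is the sawtooth function. Then ψ is odd (ψ(−t) = −ψ(t) for all t ∈ ℝ) and for every t ∈ ℝ one has q·ψ(t) + p·ψ(1 + t) ≤ t² − p. -/
open MeasureTheory

/-- The sawtooth function `h(t) = (-1)^(round t) * (t - round t)`, where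
`round t = ⌊t + 1/2⌋` is the nearest-integer function. -/
noncomputable def sawtooth (t : ℝ) : ℝ := (-1 : ℝ) ^ (round t) * (t - round t)

/-!
The sawtooth `h` is the identity on `[-1/2, 1/2]` and satisfies `h(n + t) = (-1)^n h(t)` for
integers `n`; this makes it odd and gives `h(1 + t) = -h(t)`. The latter collapses
`q ψ(t) + p ψ(1 + t)` to `h(t) - t - p`, so the inequality is `h(t) ≤ t² + t`. Since `|h| ≤ 1/2`,
this is clear once `|t + 1/2| ≥ 1`; on `[-3/2, 1/2)` the sawtooth is `t` or `-(1 + t)`.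
-/

lemma sawtooth_intCast_add (n : ℤ) (t : ℝ) : sawtooth (n + t) = (-1) ^ n * sawtooth t := by
  rw [sawtooth, sawtooth, round_intCast_add, zpow_add₀ (by norm_num)]
  push_cast
  ring

lemma sawtooth_one_add (t : ℝ) : sawtooth (1 + t) = -sawtooth t := by
  simpa using sawtooth_intCast_add 1 t

lemma sawtooth_eq_self_of_mem_Icc {t : ℝ} (ht : t ∈ Set.Icc (-(1 / 2)) (1 / 2)) :
    sawtooth t = t := by
  rcases eq_or_lt_of_le ht.2 with rfl | hlt
  · norm_num [sawtooth, round_two_inv]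
  · have h0 : round t = 0 := round_eq_zero_iff.2 ⟨ht.1, hlt⟩
    simp [sawtooth, h0]

lemma abs_sawtooth_le (t : ℝ) : |sawtooth t| ≤ 1 / 2 := by
  rw [sawtooth, abs_mul, abs_neg_one_zpow, one_mul]
  exact abs_sub_round t

lemma sawtooth_neg (t : ℝ) : sawtooth (-t) = -sawtooth t := by
  have hs := abs_le.1 (abs_sub_round t)
  have hs' : -(t - round t) ∈ Set.Icc (-(1 / 2)) (1 / 2) := ⟨by linarith, by linarith⟩
  have hnt : -t = ((-round t : ℤ) : ℝ) + -(t - round t) := by push_cast; ring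
  rw [hnt, sawtooth_intCast_add, sawtooth_eq_self_of_mem_Icc hs', sawtooth, zpow_neg, ← inv_zpow,
    inv_neg, inv_one]
  ring

lemma sawtooth_le_sq_add_self (t : ℝ) : sawtooth t ≤ t ^ 2 + t := by
  by_cases hfar : 1 ≤ |t + 1 / 2|
  · have hsq : 1 ≤ (t + 1 / 2) ^ 2 := by nlinarith [sq_abs (t + 1 / 2)]
    linarith [(abs_le.1 (abs_sawtooth_le t)).2]
  obtain ⟨hlo, hhi⟩ := abs_lt.1 (not_le.1 hfar)
  rcases le_or_gt (-(1 / 2)) t with hmid | hleft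
  · rw [sawtooth_eq_self_of_mem_Icc ⟨hmid, by linarith⟩]
    linarith [sq_nonneg t]
  · have h : sawtooth t = -(1 + t) := by
      rw [← neg_neg (sawtooth t), ← sawtooth_one_add,
        sawtooth_eq_self_of_mem_Icc ⟨by linarith, by linarith⟩]
    rw [h]
    nlinarith [sq_nonneg (1 + t)]

theorem dual_test_function_properties
    (p : ℝ) (hp : p ≠ 1 / 2) (q : ℝ) (hq : q = 1 - p)
    (ψ : ℝ → ℝ) (hψ : ∀ t : ℝ, ψ t = sawtooth t / (q - p) - t) :
    (∀ t : ℝ, ψ (-t) = -ψ t) ∧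
    (∀ t : ℝ, q * ψ t + p * ψ (1 + t) ≤ t ^ 2 - p) := by
  have hqp : q - p ≠ 0 := by
    rw [hq]
    intro h
    exact hp (by linarith)
  refine ⟨fun t => ?_, fun t => ?_⟩
  · rw [hψ, hψ, sawtooth_neg]
    ring
  · have hcollapse : q * ψ t + p * ψ (1 + t) = sawtooth t - t - p := by
      rw [hψ, hψ, sawtooth_one_add]
      field_simp
      rw [hq]
      ring
    linarith [sawtooth_le_sq_add_self t]
end

section
/- Let p ∈ [0,1] and q = 1 − p. Let ψ : ℝ → ℝ be an odd measurable function satisfying q·ψ(t) + p·ψ(1 + t) ≤ t² − p for all t ∈ ℝ. Let X and Y be independent real random variables on a probability space with X ~ Bernoulli(p), Y square-integrable, X + Y symmetric about 0, and ψ(X + Y) integrable. Then E[Y²] ≥ p. -/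
/-!
Oddness of `ψ` and the symmetry of `X + Y` give `E ψ(X + Y) = 0`. Integrating first over the
Bernoulli variable `X` (independence and Fubini) turns this into
`E[(1 - p) ψ(Y) + p ψ(1 + Y)] = 0`, and the pointwise bound on `ψ` then yields
`0 ≤ E[Y²] - p`.
-/

open MeasureTheory ProbabilityTheory

section

variable {Ω : Type*} [MeasurableSpace Ω] {μ : Measure Ω}

lemma integral_comp_eq_zero_of_odd_of_map_neg_eq {E : Type*} [MeasurableSpace E] [Neg E]
    [MeasurableNeg E] {Z : Ω → E} {ψ : E → ℝ} (hZ : Measurable Z) (hψ : Measurable ψ)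
    (hodd : ∀ t, ψ (-t) = -ψ t) (hsymm : μ.map Z = μ.map (fun ω => -Z ω)) :
    ∫ ω, ψ (Z ω) ∂μ = 0 := by
  have h : ∫ ω, ψ (Z ω) ∂μ = -∫ ω, ψ (Z ω) ∂μ := by
    calc ∫ ω, ψ (Z ω) ∂μ = ∫ t, ψ t ∂μ.map Z :=
          (integral_map hZ.aemeasurable hψ.aestronglyMeasurable).symm
      _ = ∫ ω, ψ (-Z ω) ∂μ := by
          rw [hsymm]; exact integral_map hZ.neg.aemeasurable hψ.aestronglyMeasurable
      _ = -∫ ω, ψ (Z ω) ∂μ := by simp only [hodd, integral_neg]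
  linarith

section Bernoulli

variable [IsProbabilityMeasure μ] {X : Ω → ℝ} {p : ℝ}

lemma ae_eq_zero_or_eq_one_of_measure_eq (hX : Measurable X)
    (hX1 : μ {ω | X ω = 1} = ENNReal.ofReal p)
    (hX0 : μ {ω | X ω = 0} = ENNReal.ofReal (1 - p)) :
    ∀ᵐ ω ∂μ, X ω = 0 ∨ X ω = 1 := by
  have hdisj : Disjoint {ω | X ω = 0} {ω | X ω = 1} :=
    Set.disjoint_left.mpr fun ω h0 h1 => by simp_all
  have hunion : μ ({ω | X ω = 0} ∪ {ω | X ω = 1}) = 1 := by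
    refine le_antisymm prob_le_one ?_
    calc (1 : ENNReal) = ENNReal.ofReal (1 - p + p) := by norm_num
      _ ≤ ENNReal.ofReal (1 - p) + ENNReal.ofReal p := ENNReal.ofReal_add_le
      _ = μ ({ω | X ω = 0} ∪ {ω | X ω = 1}) := by
          rw [measure_union hdisj (hX (measurableSet_singleton 1)), hX0, hX1]
  have hmeas : MeasurableSet ({ω | X ω = 0} ∪ {ω | X ω = 1}) :=
    (hX (measurableSet_singleton 0)).union (hX (measurableSet_singleton 1))
  exact (ae_iff_measure_eq hmeas.nullMeasurableSet).mpr (hunion.trans measure_univ.symm)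

lemma integral_comp_eq_of_bernoulli {E : Type*} [NormedAddCommGroup E] [NormedSpace ℝ E]
    [CompleteSpace E] (hX : Measurable X) (hp : p ∈ Set.Icc (0 : ℝ) 1)
    (hX1 : μ {ω | X ω = 1} = ENNReal.ofReal p)
    (hX0 : μ {ω | X ω = 0} = ENNReal.ofReal (1 - p)) (f : ℝ → E) :
    ∫ ω, f (X ω) ∂μ = (1 - p) • f 0 + p • f 1 := by
  have hs0 : MeasurableSet {ω | X ω = 0} := hX (measurableSet_singleton 0)
  have hs1 : MeasurableSet {ω | X ω = 1} := hX (measurableSet_singleton 1)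
  have hsimple : (fun ω => f (X ω)) =ᵐ[μ] fun ω =>
      {ω | X ω = 0}.indicator (fun _ => f 0) ω
        + {ω | X ω = 1}.indicator (fun _ => f 1) ω := by
    filter_upwards [ae_eq_zero_or_eq_one_of_measure_eq hX hX1 hX0] with ω hω
    rcases hω with h | h <;> simp [Set.indicator, h]
  rw [integral_congr_ae hsimple, integral_add ((integrable_const _).indicator hs0)
    ((integrable_const _).indicator hs1), integral_indicator_const _ hs0,
    integral_indicator_const _ hs1, measureReal_def, measureReal_def, hX0, hX1,
    ENNReal.toReal_ofReal (sub_nonneg.mpr hp.2), ENNReal.toReal_ofReal hp.1]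

end Bernoulli

namespace ProbabilityTheory

variable [IsFiniteMeasure μ] {α β E : Type*} [MeasurableSpace α] [MeasurableSpace β]
  [NormedAddCommGroup E] {X : Ω → α} {Y : Ω → β} {F : α → β → E}

lemma IndepFun.integrable_uncurry_prod_map (hXY : IndepFun X Y μ) (hX : Measurable X)
    (hY : Measurable Y) (hF : StronglyMeasurable (Function.uncurry F))
    (hint : Integrable (fun ω => F (X ω) (Y ω)) μ) :
    Integrable (Function.uncurry F) ((μ.map X).prod (μ.map Y)) := by
  rw [← hXY.map_prod_eq_prod_map_map hX.aemeasurable hY.aemeasurable]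
  exact (integrable_map_measure hF.aestronglyMeasurable (hX.prodMk hY).aemeasurable).mpr hint

lemma IndepFun.integrable_integral_comp [NormedSpace ℝ E] (hXY : IndepFun X Y μ)
    (hX : Measurable X) (hY : Measurable Y) (hF : StronglyMeasurable (Function.uncurry F))
    (hint : Integrable (fun ω => F (X ω) (Y ω)) μ) :
    Integrable (fun ω => ∫ ω', F (X ω') (Y ω) ∂μ) μ := by
  have hprod := hXY.integrable_uncurry_prod_map hX hY hF hint
  have hinner : Integrable (fun y => ∫ x, F x y ∂μ.map X) (μ.map Y) :=
    hprod.integral_prod_right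
  refine ((integrable_map_measure hinner.1 hY.aemeasurable).mp hinner).congr
    (.of_forall fun ω => ?_)
  exact integral_map hX.aemeasurable
    (hF.comp_measurable measurable_prodMk_right).aestronglyMeasurable

lemma IndepFun.integral_comp_eq_integral_integral [NormedSpace ℝ E] [CompleteSpace E]
    (hXY : IndepFun X Y μ) (hX : Measurable X) (hY : Measurable Y)
    (hF : StronglyMeasurable (Function.uncurry F))
    (hint : Integrable (fun ω => F (X ω) (Y ω)) μ) :
    ∫ ω, F (X ω) (Y ω) ∂μ = ∫ ω, ∫ ω', F (X ω') (Y ω) ∂μ ∂μ := by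
  have hlaw := hXY.map_prod_eq_prod_map_map hX.aemeasurable hY.aemeasurable
  have hprod := hXY.integrable_uncurry_prod_map hX hY hF hint
  calc ∫ ω, F (X ω) (Y ω) ∂μ
        = ∫ z, Function.uncurry F z ∂(μ.map X).prod (μ.map Y) := by
        rw [← hlaw, integral_map (hX.prodMk hY).aemeasurable hF.aestronglyMeasurable]; rfl
    _ = ∫ y, ∫ x, F x y ∂μ.map X ∂μ.map Y := integral_prod_symm _ hprod
    _ = ∫ ω, ∫ ω', F (X ω') (Y ω) ∂μ ∂μ := by
        rw [integral_map (f := fun y => ∫ x, F x y ∂μ.map X) hY.aemeasurable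
          hprod.integral_prod_right.1]
        congr 1 with ω
        exact integral_map hX.aemeasurable
          (hF.comp_measurable measurable_prodMk_right).aestronglyMeasurable

end ProbabilityTheory

end

theorem second_moment_bound_of_dual_test_function
    {Ω : Type*} [MeasurableSpace Ω] (μ : Measure Ω) [IsProbabilityMeasure μ]
    (p : ℝ) (hp : p ∈ Set.Icc (0 : ℝ) 1)
    (ψ : ℝ → ℝ) (hψm : Measurable ψ)
    (hodd : ∀ t : ℝ, ψ (-t) = -ψ t)
    (hψle : ∀ t : ℝ, (1 - p) * ψ t + p * ψ (1 + t) ≤ t ^ 2 - p)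
    (X Y : Ω → ℝ) (hXm : Measurable X) (hYm : Measurable Y)
    (hX1 : μ {ω | X ω = 1} = ENNReal.ofReal p)
    (hX0 : μ {ω | X ω = 0} = ENNReal.ofReal (1 - p))
    (hindep : IndepFun X Y μ)
    (hY2 : MemLp Y 2 μ)
    (hsymm : Measure.map (fun ω => X ω + Y ω) μ
      = Measure.map (fun ω => -(X ω + Y ω)) μ)
    (hint : Integrable (fun ω => ψ (X ω + Y ω)) μ) :
    ∫ ω, (Y ω) ^ 2 ∂μ ≥ p := by
  have hshift : ∀ y, ∫ ω, ψ (X ω + y) ∂μ = (1 - p) * ψ y + p * ψ (1 + y) := fun y => by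
    simpa using integral_comp_eq_of_bernoulli hXm hp hX1 hX0 (fun x => ψ (x + y))
  have hF : StronglyMeasurable (Function.uncurry fun x y : ℝ => ψ (x + y)) :=
    (hψm.comp measurable_add).stronglyMeasurable
  have hmean : ∫ ω, (1 - p) * ψ (Y ω) + p * ψ (1 + Y ω) ∂μ = 0 := by
    simp_rw [← hshift]
    rw [← hindep.integral_comp_eq_integral_integral hXm hYm hF hint]
    exact integral_comp_eq_zero_of_odd_of_map_neg_eq (hXm.add hYm) hψm hodd hsymm
  have hintegrable : Integrable (fun ω => (1 - p) * ψ (Y ω) + p * ψ (1 + Y ω)) μ := by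
    simpa only [hshift] using hindep.integrable_integral_comp hXm hYm hF hint
  have hY2int : Integrable (fun ω => Y ω ^ 2 - p) μ := hY2.integrable_sq.sub (integrable_const p)
  have hle := integral_mono hintegrable hY2int fun ω => hψle (Y ω)
  rw [hmean, integral_sub hY2.integrable_sq (integrable_const p), integral_const] at hle
  simpa [sub_nonneg] using hle
end
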